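/- Let n ≥ 1 and let S ⊆ {1,…,n−1}. Then the number of Cayley permutations v of length n with Asc∘(v) ⊆ S equals Σ_{w ∈ S_n, Asc(w) ⊆ S} 2^{des(w^{-1})}, and the number of Cayley permutations v of length n with Asc(v) ⊆ S equals Σ_{w ∈ S_n, Des(w) ⊆ S} 2^{des(w^{-1})}. -/

import Mathlib

namespace CayPaper

/-- A word of length `n` (1-indexed): it vanishes outside `{1,…,n}`. -/
def IsWord (n : ℕ) (v : ℕ → ℕ) : Prop := ∀ i, i ∉ Set.Icc 1 n → v i = 0

/-- A Cayley permutation of length `n`: a word on `{1,…,n}` whose image is `{1,…,k}`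
for some `k ≤ n`. -/
def IsCayley (n : ℕ) (v : ℕ → ℕ) : Prop :=
  IsWord n v ∧ ∃ k, v '' Set.Icc 1 n = Set.Icc 1 k

/-- A weakly increasing Cayley permutation of length `n`. -/
def IsWI (n : ℕ) (v : ℕ → ℕ) : Prop :=
  IsCayley n v ∧ MonotoneOn v (Set.Icc 1 n)

/-- A permutation of `{1,…,n}`, encoded as a word. -/
def IsPermWord (n : ℕ) (v : ℕ → ℕ) : Prop :=
  IsWord n v ∧ Set.BijOn v (Set.Icc 1 n) (Set.Icc 1 n)

/-- The weak descent set `Des(v) = { i ∈ {1,…,n−1} : v(i) ≥ v(i+1) }`. -/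
def desSet (n : ℕ) (v : ℕ → ℕ) : Finset ℕ :=
  (Finset.Icc 1 (n - 1)).filter fun i => v (i + 1) ≤ v i

/-- The strict descent set `Des∘(v) = { i : v(i) > v(i+1) }`. -/
def sdesSet (n : ℕ) (v : ℕ → ℕ) : Finset ℕ :=
  (Finset.Icc 1 (n - 1)).filter fun i => v (i + 1) < v i

/-- The weak ascent set `Asc(v) = { i : v(i) ≤ v(i+1) }`. -/
def ascSet (n : ℕ) (v : ℕ → ℕ) : Finset ℕ :=
  (Finset.Icc 1 (n - 1)).filter fun i => v i ≤ v (i + 1)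

/-- The strict ascent set `Asc∘(v) = { i : v(i) < v(i+1) }`. -/
def sascSet (n : ℕ) (v : ℕ → ℕ) : Finset ℕ :=
  (Finset.Icc 1 (n - 1)).filter fun i => v i < v (i + 1)

def des (n : ℕ) (v : ℕ → ℕ) : ℕ := (desSet n v).card
def sdes (n : ℕ) (v : ℕ → ℕ) : ℕ := (sdesSet n v).card
def asc (n : ℕ) (v : ℕ → ℕ) : ℕ := (ascSet n v).card
def sasc (n : ℕ) (v : ℕ → ℕ) : ℕ := (sascSet n v).card

/-- The maximum value of a word. -/
def wmax (n : ℕ) (v : ℕ → ℕ) : ℕ := (Finset.Icc 1 n).sup v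

/-- Reverse: `v^r(i) = v(n+1−i)`. -/
def wrev (n : ℕ) (v : ℕ → ℕ) : ℕ → ℕ := fun i =>
  if 1 ≤ i ∧ i ≤ n then v (n + 1 - i) else 0

/-- Complement: `v^c(i) = max(v)+1−v(i)`. -/
def wcomp (n : ℕ) (v : ℕ → ℕ) : ℕ → ℕ := fun i =>
  if 1 ≤ i ∧ i ≤ n then wmax n v + 1 - v i else 0

/-- The word `(σ(1), …, σ(n))` (1-indexed) of a permutation `σ` of `Fin n`. -/
def permWord (n : ℕ) (σ : Equiv.Perm (Fin n)) : ℕ → ℕ := fun i =>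
  if h : 1 ≤ i ∧ i ≤ n then ((σ ⟨i - 1, by omega⟩ : Fin n) : ℕ) + 1 else 0

/-- The conjugate of `u`: the unique weakly increasing Cayley permutation of
length `n` whose descent set is `{1,…,n−1} \ Des(u)`. -/
noncomputable def conjWI (n : ℕ) (u : ℕ → ℕ) : ℕ → ℕ :=
  haveI := Classical.dec (∃ w, IsWI n w ∧ desSet n w = Finset.Icc 1 (n - 1) \ desSet n u)
  if h : ∃ w, IsWI n w ∧ desSet n w = Finset.Icc 1 (n - 1) \ desSet n u
    then h.choose else fun _ => 0

/-- A Burge matrix: every row and every column contains a nonzero entry. -/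
def IsBurge {p q : ℕ} (M : Matrix (Fin p) (Fin q) ℕ) : Prop :=
  (∀ i, ∃ j, M i j ≠ 0) ∧ (∀ j, ∃ i, M i j ≠ 0)

/-- The size of a matrix with natural entries: the sum of its entries. -/
def matSize {p q : ℕ} (M : Matrix (Fin p) (Fin q) ℕ) : ℕ := ∑ i, ∑ j, M i j

/-- Burge matrices of size `n` (of all dimensions). -/
def BurgeMatrices (n : ℕ) : Set (Σ p : ℕ, Σ q : ℕ, Matrix (Fin p) (Fin q) ℕ) :=
  {M | IsBurge M.2.2 ∧ matSize M.2.2 = n}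

/-- Binary Burge matrices of size `n`. -/
def BinaryBurgeMatrices (n : ℕ) : Set (Σ p : ℕ, Σ q : ℕ, Matrix (Fin p) (Fin q) ℕ) :=
  {M | M ∈ BurgeMatrices n ∧ ∀ i j, M.2.2 i j ≤ 1}

/-- Burge matrices of size `n` whose every column sums to `1`. -/
def ColSumOneBurgeMatrices (n : ℕ) : Set (Σ p : ℕ, Σ q : ℕ, Matrix (Fin p) (Fin q) ℕ) :=
  {M | M ∈ BurgeMatrices n ∧ ∀ j, ∑ i, M.2.2 i j = 1}

/-- Burge words: pairs `(u,v) ∈ WI[n] × Cay[n]` with `Des(u) ⊆ Des(v)`. -/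
def BurPairs (n : ℕ) : Set ((ℕ → ℕ) × (ℕ → ℕ)) :=
  {p | IsWI n p.1 ∧ IsCayley n p.2 ∧ desSet n p.1 ⊆ desSet n p.2}

/-- Pairs `(u,v) ∈ WI[n] × Cay[n]` with `Des(u) ⊆ Des∘(v)`. -/
def BBurPairs (n : ℕ) : Set ((ℕ → ℕ) × (ℕ → ℕ)) :=
  {p | IsWI n p.1 ∧ IsCayley n p.2 ∧ desSet n p.1 ⊆ sdesSet n p.2}

/-- Pairs `(u,v) ∈ WI[n] × S_n` with `Des(u) ⊆ Des(v)`. -/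
def PBurPairs (n : ℕ) : Set ((ℕ → ℕ) × (ℕ → ℕ)) :=
  {p | IsWI n p.1 ∧ IsPermWord n p.2 ∧ desSet n p.1 ⊆ desSet n p.2}

/-- `Ω[n]`: pairs `(u,v) ∈ WI[n] × Cay[n]` with `Des(u) ⊇ Des(v)`. -/
def OmegaPairs (n : ℕ) : Set ((ℕ → ℕ) × (ℕ → ℕ)) :=
  {p | IsWI n p.1 ∧ IsCayley n p.2 ∧ desSet n p.2 ⊆ desSet n p.1}

/-- `v` lists the positions `1,…,n` in the order obtained by sorting the columns
`(x_i, i)` so that first components are weakly increasing, ties broken by strictly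
decreasing second components.  For a permutation word `v` this says exactly that
`v = Γ(id, x)`, the bottom row of the Burge transpose of `(id, x)`. -/
def sortsColumns (n : ℕ) (x v : ℕ → ℕ) : Prop :=
  ∀ i ∈ Finset.Icc 1 (n - 1),
    x (v i) < x (v (i + 1)) ∨ (x (v i) = x (v (i + 1)) ∧ v (i + 1) < v i)

/-- The Fishburn basis of a permutation word `v`:
`basis(v) = { x ∈ Cay[n] : Γ(id, x) = v }`. -/
def fishburnBasis (n : ℕ) (v : ℕ → ℕ) : Set (ℕ → ℕ) :=
  {x | IsCayley n x ∧ sortsColumns n x v}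

/-- Stanley's `v`-compatibility condition:
`x(v(1)) ≤ ⋯ ≤ x(v(n))` with strict inequality at every ascent of `v`. -/
def VCompatible (n : ℕ) (v x : ℕ → ℕ) : Prop :=
  (∀ i ∈ Finset.Icc 1 (n - 1), x (v i) ≤ x (v (i + 1))) ∧
    ∀ i ∈ Finset.Icc 1 (n - 1), v i < v (i + 1) → x (v i) < x (v (i + 1))

/-- A map `{1,…,n} → {1,…,m}`, encoded as a word. -/
def IsMapTo (n m : ℕ) (x : ℕ → ℕ) : Prop :=
  IsWord n x ∧ ∀ i ∈ Set.Icc 1 n, x i ∈ Set.Icc 1 m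

/-- Weakly increasing maps `{1,…,n} → {1,…,m}`. -/
def WIgen (n m : ℕ) : Set (ℕ → ℕ) :=
  {u | IsMapTo n m u ∧ MonotoneOn u (Set.Icc 1 n)}


/-!
Every Cayley permutation `v` factors uniquely as `v = r_F ∘ σ`, where `σ` is its standardization
(equal letters are labelled from right to left), `r_F m = #{s ∈ F | s < m} + 1`, and
`Asc(σ⁻¹) ⊆ F ⊆ {1,…,n-1}`: the set `F` is where the weakly increasing rearrangement of `v`
strictly increases, and the lower bound on `F` is exactly what makes `σ` the standardization of
`r_F ∘ σ`. Standardization turns strict ascents into ascents and weak descents into descents, so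
`Asc∘(v) = Asc(σ)` and `Des(v) = Des(σ)`, and each `σ` admits `2 ^ des(σ⁻¹)` sets `F`.
The complement `v ↦ max v + 1 - v` exchanges `Asc` and `Des`, which reduces the second count to
one of the same kind.
-/

open Finset

section PermWord

variable {n : ℕ} (σ : Equiv.Perm (Fin n))

lemma exists_fin_of_mem_Icc {i : ℕ} (hi : i ∈ Set.Icc 1 n) : ∃ a : Fin n, i = a + 1 :=
  ⟨⟨i - 1, by grind⟩, by grind⟩

lemma permWord_val_add_one (a : Fin n) : permWord n σ (a + 1) = σ a + 1 := by
  simp [permWord]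

lemma permWord_mem_Icc {i : ℕ} (hi : i ∈ Set.Icc 1 n) : permWord n σ i ∈ Set.Icc 1 n := by
  obtain ⟨a, rfl⟩ := exists_fin_of_mem_Icc hi
  rw [permWord_val_add_one]
  exact ⟨by omega, (σ a).isLt⟩

lemma permWord_inv_permWord {i : ℕ} (hi : i ∈ Set.Icc 1 n) :
    permWord n σ⁻¹ (permWord n σ i) = i := by
  obtain ⟨a, rfl⟩ := exists_fin_of_mem_Icc hi
  simp [permWord_val_add_one]

lemma permWord_permWord_inv {i : ℕ} (hi : i ∈ Set.Icc 1 n) :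
    permWord n σ (permWord n σ⁻¹ i) = i := by
  simpa using permWord_inv_permWord σ⁻¹ hi

lemma permWord_bijOn : Set.BijOn (permWord n σ) (Set.Icc 1 n) (Set.Icc 1 n) :=
  Set.InvOn.bijOn ⟨fun _ hi => permWord_inv_permWord σ hi, fun _ hi => permWord_permWord_inv σ hi⟩
    (fun _ hi => permWord_mem_Icc σ hi) (fun _ hi => permWord_mem_Icc σ⁻¹ hi)

lemma sdiff_ascSet_permWord :
    Icc 1 (n - 1) \ ascSet n (permWord n σ) = desSet n (permWord n σ) := by
  ext t
  simp only [ascSet, desSet, mem_sdiff, mem_filter, mem_Icc]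
  refine ⟨fun ⟨ht, h⟩ => ⟨ht, by omega⟩, fun ⟨ht, h⟩ => ⟨ht, fun ⟨_, h'⟩ => ?_⟩⟩
  exact (permWord_bijOn σ).injOn.ne (⟨ht.1, by omega⟩ : t ∈ Set.Icc 1 n)
    (⟨by omega, by omega⟩ : t + 1 ∈ Set.Icc 1 n) (by omega) (by omega)

end PermWord

section CountBelow

def countBelow (F : Finset ℕ) (m : ℕ) : ℕ := #{s ∈ F | s < m}

variable {F : Finset ℕ}

lemma countBelow_succ (m : ℕ) :
    countBelow F (m + 1) = countBelow F m + if m ∈ F then 1 else 0 := by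
  have : {s ∈ F | s < m + 1} = {s ∈ F | s < m} ∪ {s ∈ F | s = m} := by
    ext; simp only [mem_filter, mem_union]; grind
  rw [countBelow, countBelow, this, card_union_of_disjoint (disjoint_filter.2 fun _ _ h => h.ne),
    filter_eq']
  split_ifs <;> simp

lemma countBelow_mono : Monotone (countBelow F) := fun _ _ h =>
  card_le_card (monotone_filter_right F fun _ _ hs => hs.trans_le h)

lemma countBelow_lt_succ_iff {m : ℕ} : countBelow F m < countBelow F (m + 1) ↔ m ∈ F := by
  rw [countBelow_succ]; split_ifs <;> simpa

lemma countBelow_eq_zero {m : ℕ} (h : ∀ s ∈ F, m ≤ s) : countBelow F m = 0 := by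
  simpa [countBelow, filter_eq_empty_iff] using h

lemma countBelow_eq_card {m : ℕ} (h : ∀ s ∈ F, s < m) : countBelow F m = #F := by
  rw [countBelow, filter_true_of_mem h]

lemma exists_eq_of_succ_le_add_one {f : ℕ → ℕ} (hf : ∀ m, f (m + 1) ≤ f m + 1) {a b j : ℕ}
    (hab : a ≤ b) (ha : f a ≤ j) (hb : j ≤ f b) : ∃ m ∈ Set.Icc a b, f m = j := by
  induction b, hab using Nat.le_induction with
  | base => exact ⟨a, ⟨le_rfl, le_rfl⟩, by omega⟩
  | succ b hab ih =>
    by_cases hj : j ≤ f b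
    · obtain ⟨m, hm, rfl⟩ := ih hj
      exact ⟨m, ⟨hm.1, by grind⟩, rfl⟩
    · exact ⟨b + 1, ⟨by omega, le_rfl⟩, by grind⟩

lemma countBelow_image_Icc {n : ℕ} (hn : 1 ≤ n) (hF : F ⊆ Icc 1 (n - 1)) :
    (countBelow F · + 1) '' Set.Icc 1 n = Set.Icc 1 (#F + 1) := by
  have hF' : ∀ s ∈ F, 1 ≤ s ∧ s < n := fun s hs => by grind
  have h1 : countBelow F 1 = 0 := countBelow_eq_zero fun s hs => (hF' s hs).1
  have hn' : countBelow F n = #F := countBelow_eq_card fun s hs => (hF' s hs).2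
  ext j
  constructor
  · rintro ⟨m, hm, rfl⟩
    dsimp only
    have := countBelow_mono (F := F) hm.2
    exact ⟨by omega, by omega⟩
  · rintro ⟨hj1, hj2⟩
    obtain ⟨m, hm, hmj⟩ := exists_eq_of_succ_le_add_one (f := countBelow F)
      (fun m => by rw [countBelow_succ]; split_ifs <;> omega) hn (j := j - 1) (by omega) (by omega)
    exact ⟨m, hm, by dsimp only; omega⟩

lemma sascSet_countBelow {n : ℕ} (hF : F ⊆ Icc 1 (n - 1)) :
    sascSet n (countBelow F · + 1) = F := by
  ext t
  simp only [sascSet, mem_filter, add_lt_add_iff_right, countBelow_lt_succ_iff]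
  exact ⟨And.right, fun ht => ⟨hF ht, ht⟩⟩

lemma sascSet_congr {n : ℕ} {u u' : ℕ → ℕ} (h : Set.EqOn u u' (Set.Icc 1 n)) :
    sascSet n u = sascSet n u' :=
  filter_congr fun t ht => by
    obtain ⟨h1, h2⟩ := mem_Icc.1 ht
    rw [h ⟨h1, by omega⟩, h ⟨by omega, by omega⟩]

lemma eq_countBelow_sascSet {n k : ℕ} {u : ℕ → ℕ} (hmono : MonotoneOn u (Set.Icc 1 n))
    (himage : u '' Set.Icc 1 n = Set.Icc 1 k) {m : ℕ} (hm : m ∈ Set.Icc 1 n) :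
    u m = countBelow (sascSet n u) m + 1 := by
  have hval : ∀ i ∈ Set.Icc 1 n, u i ∈ Set.Icc 1 k := fun i hi =>
    himage ▸ Set.mem_image_of_mem u hi
  have hhit : ∀ c ∈ Set.Icc 1 k, ∃ i ∈ Set.Icc 1 n, u i = c := fun c hc => by rwa [← himage] at hc
  obtain ⟨hm1, hmn⟩ := hm
  induction m, hm1 using Nat.le_induction with
  | base =>
    have h0 : countBelow (sascSet n u) 1 = 0 :=
      countBelow_eq_zero fun s hs => (mem_Icc.1 (filter_subset _ _ hs)).1
    obtain ⟨h1, hk⟩ := hval 1 ⟨le_rfl, hmn⟩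
    obtain ⟨i, hi, hi1⟩ := hhit 1 ⟨le_rfl, h1.trans hk⟩
    have := hmono ⟨le_rfl, hmn⟩ hi hi.1
    omega
  | succ m hm ih =>
    have hm' : m ∈ Set.Icc 1 n := ⟨hm, by omega⟩
    have hm'' : m + 1 ∈ Set.Icc 1 n := ⟨by omega, hmn⟩
    have hle := hmono hm' hm'' (by omega)
    have hgap : u (m + 1) ≤ u m + 1 := by
      by_contra! h
      obtain ⟨i, hi, hiu⟩ := hhit (u m + 1) ⟨by omega, by have := (hval _ hm'').2; omega⟩
      rcases le_or_gt i m with him | him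
      · have := hmono hi hm' him; omega
      · have := hmono hm'' hi him; omega
    have hmem : m ∈ sascSet n u ↔ u m < u (m + 1) := by
      simp only [sascSet, mem_filter, mem_Icc]; omega
    have := ih (by omega)
    rw [countBelow_succ, if_congr hmem rfl rfl]
    split_ifs <;> omega

end CountBelow

section Standardization

variable {n : ℕ} (v : ℕ → ℕ)

/-- `a : Fin n` stands for position `a + 1`; positions are compared by value, ties broken from
right to left. -/
def stdKey (n : ℕ) (v : ℕ → ℕ) (a : Fin n) : Lex (ℕ × (Fin n)ᵒᵈ) :=
  toLex (v (a + 1), OrderDual.toDual a)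

/-- The standardization of `v`: the permutation `σ` with `σ i < σ j` iff `v i < v j`, or
`v i = v j` and `j < i`. -/
def std (n : ℕ) (v : ℕ → ℕ) : Equiv.Perm (Fin n) := (Tuple.sort (stdKey n v))⁻¹

lemma stdKey_injective : Function.Injective (stdKey n v) := fun a b h => by
  simpa [stdKey] using congrArg (fun x => OrderDual.ofDual (ofLex x).2) h

lemma stdKey_lt_stdKey_iff {a b : Fin n} :
    stdKey n v a < stdKey n v b ↔ v (a + 1) < v (b + 1) ∨ v (a + 1) = v (b + 1) ∧ b < a := by
  simp [stdKey, Prod.Lex.toLex_lt_toLex]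

lemma strictMono_stdKey_comp_std_inv : StrictMono (stdKey n v ∘ ⇑(std n v)⁻¹) := by
  rw [std, inv_inv]
  exact (Tuple.monotone_sort _).strictMono_of_injective
    ((stdKey_injective v).comp (Tuple.sort _).injective)

lemma std_lt_std_iff {a b : Fin n} : std n v a < std n v b ↔ stdKey n v a < stdKey n v b := by
  simpa using ((strictMono_stdKey_comp_std_inv v).lt_iff_lt (a := std n v a) (b := std n v b)).symm

lemma std_eq_of_monotone {σ : Equiv.Perm (Fin n)} (h : Monotone (stdKey n v ∘ ⇑σ⁻¹)) :
    std n v = σ := by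
  rw [std, inv_eq_iff_eq_inv, eq_comm]
  refine Tuple.eq_sort_iff.2 ⟨h, fun i j hij heq => ?_⟩
  exact absurd (σ⁻¹.injective (stdKey_injective v heq)) hij.ne

lemma permWord_std_lt_iff {i j : ℕ} (hi : i ∈ Set.Icc 1 n) (hj : j ∈ Set.Icc 1 n) :
    permWord n (std n v) i < permWord n (std n v) j ↔ v i < v j ∨ v i = v j ∧ j < i := by
  obtain ⟨a, rfl⟩ := exists_fin_of_mem_Icc hi
  obtain ⟨b, rfl⟩ := exists_fin_of_mem_Icc hj
  rw [permWord_val_add_one, permWord_val_add_one, add_lt_add_iff_right, Fin.val_fin_lt,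
    std_lt_std_iff, stdKey_lt_stdKey_iff, add_lt_add_iff_right, Fin.val_fin_lt]

lemma sascSet_eq_ascSet_permWord_std : sascSet n v = ascSet n (permWord n (std n v)) := by
  ext t
  simp only [sascSet, ascSet, mem_filter, mem_Icc]
  refine and_congr_right fun ht => ?_
  have hi : t ∈ Set.Icc 1 n := ⟨ht.1, by omega⟩
  have hj : t + 1 ∈ Set.Icc 1 n := ⟨by omega, by omega⟩
  have := (permWord_bijOn (std n v)).injOn.ne hi hj (by omega)
  have := permWord_std_lt_iff v hi hj
  omega

lemma desSet_eq_desSet_permWord_std : desSet n v = desSet n (permWord n (std n v)) := by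
  ext t
  simp only [desSet, mem_filter, mem_Icc]
  refine and_congr_right fun ht => ?_
  have hi : t ∈ Set.Icc 1 n := ⟨ht.1, by omega⟩
  have hj : t + 1 ∈ Set.Icc 1 n := ⟨by omega, by omega⟩
  have := (permWord_bijOn (std n v)).injOn.ne hi hj (by omega)
  have := permWord_std_lt_iff v hj hi
  omega

def sortedWord (n : ℕ) (v : ℕ → ℕ) : ℕ → ℕ := v ∘ permWord n (std n v)⁻¹

lemma monotoneOn_sortedWord : MonotoneOn (sortedWord n v) (Set.Icc 1 n) := by
  intro m hm m' hm' hle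
  obtain hlt | rfl := hle.lt_or_eq
  · have := (permWord_std_lt_iff v (permWord_mem_Icc _ hm) (permWord_mem_Icc _ hm')).1
      (by rwa [permWord_permWord_inv _ hm, permWord_permWord_inv _ hm'])
    simp only [sortedWord, Function.comp_apply]
    omega
  · rfl

lemma image_sortedWord : sortedWord n v '' Set.Icc 1 n = v '' Set.Icc 1 n := by
  rw [sortedWord, Set.image_comp, (permWord_bijOn _).image_eq]

end Standardization

section CayleyOf

variable {n : ℕ}

def admissible (n : ℕ) (σ : Equiv.Perm (Fin n)) : Finset (Finset ℕ) :=
  Icc (ascSet n (permWord n σ⁻¹)) (Icc 1 (n - 1))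

lemma card_admissible (σ : Equiv.Perm (Fin n)) :
    #(admissible n σ) = 2 ^ des n (permWord n σ⁻¹) := by
  have hasc : ascSet n (permWord n σ⁻¹) ⊆ Icc 1 (n - 1) := filter_subset _ _
  rw [admissible, card_Icc_finset hasc, des, ← sdiff_ascSet_permWord, card_sdiff_of_subset hasc]

def cayleyOf (n : ℕ) (σ : Equiv.Perm (Fin n)) (F : Finset ℕ) : ℕ → ℕ := fun i =>
  if i ∈ Set.Icc 1 n then countBelow F (permWord n σ i) + 1 else 0

variable {σ : Equiv.Perm (Fin n)} {F : Finset ℕ}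

lemma cayleyOf_of_mem {i : ℕ} (hi : i ∈ Set.Icc 1 n) :
    cayleyOf n σ F i = countBelow F (permWord n σ i) + 1 :=
  if_pos hi

lemma isCayley_cayleyOf (hn : 1 ≤ n) (hF : F ⊆ Icc 1 (n - 1)) : IsCayley n (cayleyOf n σ F) := by
  refine ⟨fun i hi => if_neg hi, #F + 1, ?_⟩
  rw [Set.EqOn.image_eq (f₂ := (countBelow F · + 1) ∘ permWord n σ) fun _ hi => cayleyOf_of_mem hi,
    Set.image_comp, (permWord_bijOn σ).image_eq, countBelow_image_Icc hn hF]

lemma std_cayleyOf (hF : F ∈ admissible n σ) : std n (cayleyOf n σ F) = σ := by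
  refine std_eq_of_monotone _ (monotone_of_le_succ fun a ha => ?_)
  have hsucc : ((Order.succ a : Fin n) : ℕ) = a + 1 :=
    (Nat.covBy_iff_add_one_eq.1 (Order.covBy_succ_of_not_isMax ha).coe_fin).symm
  have hkey : ∀ b : Fin n, stdKey n (cayleyOf n σ F) (σ⁻¹ b)
      = toLex (countBelow F (b + 1) + 1, OrderDual.toDual (σ⁻¹ b)) := fun b => by
    rw [stdKey, cayleyOf_of_mem ⟨by omega, (σ⁻¹ b).isLt⟩, permWord_val_add_one,
      Equiv.Perm.coe_inv, Equiv.apply_symm_apply]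
  simp only [Function.comp_apply, hkey, hsucc, Prod.Lex.toLex_le_toLex, add_lt_add_iff_right,
    add_left_inj, countBelow_lt_succ_iff, OrderDual.toDual_le_toDual]
  -- Either `a + 1 ∈ F` raises the value, or the values agree and `a + 1 ∉ Asc(σ⁻¹)` gives the
  -- right-to-left tie-break.
  by_cases h : (a : ℕ) + 1 ∈ F
  · exact Or.inl h
  refine Or.inr ⟨by rw [countBelow_succ ((a : ℕ) + 1), if_neg h, add_zero], ?_⟩
  have hasc : (a : ℕ) + 1 ∉ ascSet n (permWord n σ⁻¹) := fun h' => h ((mem_Icc.1 hF).1 h')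
  have := (Order.succ a).isLt
  simp only [ascSet, mem_filter, mem_Icc, not_and, not_le] at hasc
  have := hasc ⟨by omega, by omega⟩
  rw [permWord_val_add_one, ← hsucc, permWord_val_add_one] at this
  omega

lemma sascSet_sortedWord_cayleyOf (hF : F ∈ admissible n σ) :
    sascSet n (sortedWord n (cayleyOf n σ F)) = F := by
  rw [sortedWord, std_cayleyOf hF]
  refine (sascSet_congr fun m hm => ?_).trans (sascSet_countBelow (mem_Icc.1 hF).2)
  rw [Function.comp_apply, cayleyOf_of_mem (permWord_mem_Icc _ hm), permWord_permWord_inv _ hm]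

lemma sascSet_sortedWord_mem_admissible (v : ℕ → ℕ) :
    sascSet n (sortedWord n v) ∈ admissible n (std n v) := by
  refine mem_Icc.2 ⟨fun t ht => ?_, filter_subset _ _⟩
  simp only [ascSet, sascSet, mem_filter, mem_Icc] at ht ⊢
  refine ⟨ht.1, ?_⟩
  have ht1 : t ∈ Set.Icc 1 n := ⟨ht.1.1, by omega⟩
  have ht2 : t + 1 ∈ Set.Icc 1 n := ⟨by omega, by omega⟩
  have := (permWord_std_lt_iff v (permWord_mem_Icc _ ht1) (permWord_mem_Icc _ ht2)).1
    (by rw [permWord_permWord_inv _ ht1, permWord_permWord_inv _ ht2]; omega)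
  simp only [sortedWord, Function.comp_apply]
  omega

lemma cayleyOf_std_sascSet_sortedWord {v : ℕ → ℕ} (hv : IsCayley n v) :
    cayleyOf n (std n v) (sascSet n (sortedWord n v)) = v := by
  obtain ⟨hword, k, himage⟩ := hv
  funext i
  by_cases hi : i ∈ Set.Icc 1 n
  · rw [cayleyOf_of_mem hi, ← eq_countBelow_sascSet (monotoneOn_sortedWord v)
      (by rw [image_sortedWord, himage]) (permWord_mem_Icc _ hi)]
    simp only [sortedWord, Function.comp_apply, permWord_inv_permWord _ hi]
  · rw [cayleyOf, if_neg hi, hword i hi]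

end CayleyOf

lemma ncard_setOf_isCayley_std {n : ℕ} (hn : 1 ≤ n) (P : Equiv.Perm (Fin n) → Prop)
    [DecidablePred P] :
    {v : ℕ → ℕ | IsCayley n v ∧ P (std n v)}.ncard
      = ∑ σ ∈ univ.filter P, 2 ^ des n (permWord n σ⁻¹) := by
  have hbij : Set.BijOn (fun p : Σ _ : Equiv.Perm (Fin n), Finset ℕ => cayleyOf n p.1 p.2)
      ((univ.filter P).sigma (admissible n)) {v | IsCayley n v ∧ P (std n v)} := by
    refine Set.InvOn.bijOn (f' := fun v => ⟨std n v, sascSet n (sortedWord n v)⟩) ⟨?_, ?_⟩ ?_ ?_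
    · rintro ⟨σ, F⟩ hp
      have hF := (mem_sigma.1 hp).2
      simp only [std_cayleyOf hF, sascSet_sortedWord_cayleyOf hF]
    · rintro v ⟨hv, -⟩
      exact cayleyOf_std_sascSet_sortedWord hv
    · rintro ⟨σ, F⟩ hp
      obtain ⟨hσ, hF⟩ := mem_sigma.1 hp
      refine ⟨isCayley_cayleyOf hn (mem_Icc.1 hF).2, ?_⟩
      rw [std_cayleyOf hF]
      exact (mem_filter.1 hσ).2
    · rintro v ⟨-, hP⟩
      exact mem_sigma.2 ⟨mem_filter.2 ⟨mem_univ _, hP⟩, sascSet_sortedWord_mem_admissible v⟩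
  rw [← hbij.image_eq, hbij.injOn.ncard_image, Set.ncard_coe_finset, card_sigma]
  exact sum_congr rfl fun σ _ => card_admissible σ

section Complement

variable {n : ℕ} {v : ℕ → ℕ}

lemma wmax_eq_of_image_eq_Icc {k : ℕ} (hk : v '' Set.Icc 1 n = Set.Icc 1 k) : wmax n v = k := by
  refine le_antisymm (Finset.sup_le fun i hi => ?_) ?_
  · have : v i ∈ Set.Icc 1 k := hk ▸ Set.mem_image_of_mem v (mem_Icc.1 hi)
    exact this.2
  · rcases Nat.eq_zero_or_pos k with rfl | hk0
    · exact Nat.zero_le _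
    obtain ⟨i, hi, rfl⟩ : k ∈ v '' Set.Icc 1 n := hk ▸ ⟨hk0, le_rfl⟩
    exact le_sup (mem_Icc.2 hi)

lemma IsCayley.mem_Icc_wmax (hv : IsCayley n v) {i : ℕ} (hi : i ∈ Set.Icc 1 n) :
    v i ∈ Set.Icc 1 (wmax n v) := by
  obtain ⟨-, k, hk⟩ := hv
  rw [wmax_eq_of_image_eq_Icc hk, ← hk]
  exact Set.mem_image_of_mem v hi

lemma wcomp_of_mem {i : ℕ} (hi : i ∈ Set.Icc 1 n) : wcomp n v i = wmax n v + 1 - v i :=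
  if_pos hi

lemma image_wcomp (hv : IsCayley n v) :
    wcomp n v '' Set.Icc 1 n = Set.Icc 1 (wmax n v) := by
  obtain ⟨-, k, hk⟩ := hv
  rw [Set.EqOn.image_eq (f₂ := (wmax n v + 1 - ·) ∘ v) fun i hi => wcomp_of_mem hi,
    Set.image_comp, hk, wmax_eq_of_image_eq_Icc hk]
  ext j
  simp only [Set.mem_image, Set.mem_Icc]
  constructor
  · rintro ⟨c, hc, rfl⟩
    omega
  · exact fun hj => ⟨k + 1 - j, by omega, by omega⟩

lemma isCayley_wcomp (hv : IsCayley n v) : IsCayley n (wcomp n v) :=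
  ⟨fun _ hi => if_neg hi, _, image_wcomp hv⟩

lemma wcomp_wcomp (hv : IsCayley n v) : wcomp n (wcomp n v) = v := by
  funext i
  by_cases hi : i ∈ Set.Icc 1 n
  · obtain ⟨h1, h2⟩ := hv.mem_Icc_wmax hi
    rw [wcomp_of_mem hi, wcomp_of_mem hi, wmax_eq_of_image_eq_Icc (image_wcomp hv)]
    omega
  · rw [wcomp, if_neg (show ¬(1 ≤ i ∧ i ≤ n) from hi), hv.1 i hi]

lemma ascSet_wcomp (hv : IsCayley n v) : ascSet n (wcomp n v) = desSet n v := by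
  ext t
  simp only [ascSet, desSet, mem_filter, mem_Icc]
  refine and_congr_right fun ht => ?_
  have hi : t ∈ Set.Icc 1 n := ⟨ht.1, by omega⟩
  have hj : t + 1 ∈ Set.Icc 1 n := ⟨by omega, by omega⟩
  obtain ⟨-, hvi⟩ := hv.mem_Icc_wmax hi
  obtain ⟨-, hvj⟩ := hv.mem_Icc_wmax hj
  rw [wcomp_of_mem hi, wcomp_of_mem hj]
  omega

lemma desSet_wcomp (hv : IsCayley n v) : desSet n (wcomp n v) = ascSet n v := by
  rw [← ascSet_wcomp (isCayley_wcomp hv), wcomp_wcomp hv]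

lemma ncard_setOf_isCayley_ascSet_subset_eq_desSet (S : Finset ℕ) :
    {v : ℕ → ℕ | IsCayley n v ∧ ascSet n v ⊆ S}.ncard
      = {v : ℕ → ℕ | IsCayley n v ∧ desSet n v ⊆ S}.ncard := by
  have hbij : Set.BijOn (wcomp n) {v | IsCayley n v ∧ desSet n v ⊆ S}
      {v | IsCayley n v ∧ ascSet n v ⊆ S} :=
    Set.InvOn.bijOn ⟨fun v hv => wcomp_wcomp hv.1, fun v hv => wcomp_wcomp hv.1⟩
      (fun v ⟨hv, hS⟩ => ⟨isCayley_wcomp hv, ascSet_wcomp hv ▸ hS⟩)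
      (fun v ⟨hv, hS⟩ => ⟨isCayley_wcomp hv, desSet_wcomp hv ▸ hS⟩)
  rw [← hbij.image_eq, hbij.injOn.ncard_image]

end Complement

theorem stmt19_general (n : ℕ) (hn : 1 ≤ n) (S : Finset ℕ) :
    (Set.ncard {v : ℕ → ℕ | IsCayley n v ∧ sascSet n v ⊆ S}
      = ∑ σ ∈ Finset.univ.filter
            (fun σ : Equiv.Perm (Fin n) => ascSet n (permWord n σ) ⊆ S),
          2 ^ des n (permWord n σ⁻¹)) ∧
    (Set.ncard {v : ℕ → ℕ | IsCayley n v ∧ ascSet n v ⊆ S}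
      = ∑ σ ∈ Finset.univ.filter
            (fun σ : Equiv.Perm (Fin n) => desSet n (permWord n σ) ⊆ S),
          2 ^ des n (permWord n σ⁻¹)) := by
  constructor
  · rw [← ncard_setOf_isCayley_std hn]
    simp only [← sascSet_eq_ascSet_permWord_std]
  · rw [ncard_setOf_isCayley_ascSet_subset_eq_desSet, ← ncard_setOf_isCayley_std hn]
    simp only [← desSet_eq_desSet_permWord_std]

/-- The number of Cayley permutations with `Asc∘(v) ⊆ S` equals
`Σ_{w ∈ S_n, Asc(w) ⊆ S} 2^{des(w⁻¹)}`, and the number with `Asc(v) ⊆ S`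
equals `Σ_{w ∈ S_n, Des(w) ⊆ S} 2^{des(w⁻¹)}`. -/
theorem stmt19 (n : ℕ) (hn : 1 ≤ n) (S : Finset ℕ)
    (hS : S ⊆ Finset.Icc 1 (n - 1)) :
    (Set.ncard {v : ℕ → ℕ | IsCayley n v ∧ sascSet n v ⊆ S}
      = ∑ σ ∈ Finset.univ.filter
            (fun σ : Equiv.Perm (Fin n) => ascSet n (permWord n σ) ⊆ S),
          2 ^ des n (permWord n σ⁻¹)) ∧
    (Set.ncard {v : ℕ → ℕ | IsCayley n v ∧ ascSet n v ⊆ S}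
      = ∑ σ ∈ Finset.univ.filter
            (fun σ : Equiv.Perm (Fin n) => desSet n (permWord n σ) ⊆ S),
          2 ^ des n (permWord n σ⁻¹)) :=
  stmt19_general n hn S

end CayPaper
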